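/- arXiv:1105.3383 — 5 statements merged into one kernel-verified Lean document; each statement's English description precedes it below -/
import Mathlib

section
/- For a function f on a finite product space V^k with independent coordinates, the sum over j of the expected conditional variance along coordinate j is at least the total variance of f: ∑_j E[Var_{x_j} f] ≥ Var(f) (Efron–Stein subadditivity). -/
open Finset BigOperators

/-- Expectation under a weight function `p` on a finite type. -/
noncomputable def EXp {X : Type*} [Fintype X] (p : X → ℝ) (g : X → ℝ) : ℝ :=
  ∑ x, p x * g x

/-- Variance under a weight function `p`. -/
noncomputable def VarP {X : Type*} [Fintype X] (p : X → ℝ) (g : X → ℝ) : ℝ :=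
  EXp p (fun x => g x ^ 2) - (EXp p g) ^ 2

/-!
Induction on `k`, splitting off the coordinate `x 0`. The law of total variance writes
`Var f` as `E[Var_{x_0} f] + Var g`, where `g = E_{x_0} f` is a function of the remaining
`k` coordinates. By induction `Var g ≤ ∑_i E[Var_{x_i} g]`, and since variance is convex,
`Var_{x_i} g = Var_{x_i} E_{x_0} f ≤ E_{x_0} Var_{x_i} f`.
-/

section Weighted

variable {X : Type*} [Fintype X]

lemma EXp_sub (p a b : X → ℝ) :
    EXp p (fun x => a x - b x) = EXp p a - EXp p b := by
  simp only [EXp, mul_sub, sum_sub_distrib]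

lemma EXp_const {p : X → ℝ} (hp1 : ∑ x, p x = 1) (c : ℝ) : EXp p (fun _ => c) = c := by
  rw [EXp, ← sum_mul, hp1, one_mul]

lemma EXp_mono {p : X → ℝ} (hp : ∀ x, 0 ≤ p x) {a b : X → ℝ} (hab : ∀ x, a x ≤ b x) :
    EXp p a ≤ EXp p b :=
  sum_le_sum fun x _ => mul_le_mul_of_nonneg_left (hab x) (hp x)

lemma two_mul_VarP {p : X → ℝ} (hp1 : ∑ x, p x = 1) (g : X → ℝ) :
    2 * VarP p g = ∑ x, ∑ x', p x * p x' * (g x - g x') ^ 2 := by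
  have expand : ∀ x x' : X, p x * p x' * (g x - g x') ^ 2
      = (p x * g x ^ 2) * p x' - 2 * ((p x * g x) * (p x' * g x')) + p x * (p x' * g x' ^ 2) := by
    intro x x'; ring
  simp only [expand, sum_add_distrib, sum_sub_distrib, ← mul_sum, ← sum_mul, hp1]
  simp only [VarP, EXp]
  ring

lemma VarP_EXp_le_EXp_VarP {Y : Type*} [Fintype Y] {p : X → ℝ} (hp : ∀ x, 0 ≤ p x)
    (hp1 : ∑ x, p x = 1) {q : Y → ℝ} (hq : ∀ y, 0 ≤ q y) (hq1 : ∑ y, q y = 1)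
    (h : Y → X → ℝ) :
    VarP p (fun x => EXp q (fun y => h y x)) ≤ EXp q (fun y => VarP p (h y)) := by
  have jensen : ∀ x x' : X,
      (EXp q (fun y => h y x) - EXp q (fun y => h y x')) ^ 2
        ≤ EXp q (fun y => (h y x - h y x') ^ 2) := by
    intro x x'
    rw [← EXp_sub]
    exact Real.pow_arith_mean_le_arith_mean_pow_of_even univ q _
      (fun y _ => hq y) hq1 even_two
  suffices 2 * VarP p (fun x => EXp q (fun y => h y x)) ≤ 2 * EXp q (fun y => VarP p (h y)) by
    linarith
  calc 2 * VarP p (fun x => EXp q (fun y => h y x))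
      = ∑ x, ∑ x', p x * p x' * (EXp q (fun y => h y x) - EXp q (fun y => h y x')) ^ 2 :=
        two_mul_VarP hp1 _
    _ ≤ ∑ x, ∑ x', p x * p x' * EXp q (fun y => (h y x - h y x') ^ 2) :=
        sum_le_sum fun x _ => sum_le_sum fun x' _ =>
          mul_le_mul_of_nonneg_left (jensen x x') (mul_nonneg (hp x) (hp x'))
    _ = EXp q (fun y => ∑ x, ∑ x', p x * p x' * (h y x - h y x') ^ 2) := by
        simp only [EXp, mul_sum]
        rw [sum_comm_cycle]
        exact sum_congr rfl fun y _ => sum_congr rfl fun x _ => sum_congr rfl fun x' _ => by ring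
    _ = 2 * EXp q (fun y => VarP p (h y)) := by
        simp only [← two_mul_VarP hp1, EXp, mul_sum]
        exact sum_congr rfl fun y _ => by ring

end Weighted

section Product

variable {V : Type*} [Fintype V]

lemma EXp_pi_succ (p : V → ℝ) {k : ℕ} (F : (Fin (k + 1) → V) → ℝ) :
    EXp (fun x : Fin (k + 1) → V => ∏ i, p (x i)) F
      = EXp (fun z : Fin k → V => ∏ i, p (z i)) (fun z => EXp p (fun v => F (Fin.cons v z))) := by
  unfold EXp
  rw [← Equiv.sum_comp (Fin.consEquiv fun _ => V) (fun x => (∏ i, p (x i)) * F x),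
    Fintype.sum_prod_type_right]
  refine sum_congr rfl fun z _ => ?_
  rw [mul_sum]
  refine sum_congr rfl fun v _ => ?_
  simp only [Fin.consEquiv, Equiv.coe_fn_mk, Fin.prod_univ_succ, Fin.cons_zero, Fin.cons_succ]
  ring

lemma VarP_pi_succ (p : V → ℝ) {k : ℕ} (f : (Fin (k + 1) → V) → ℝ) :
    VarP (fun x : Fin (k + 1) → V => ∏ i, p (x i)) f
      = EXp (fun z : Fin k → V => ∏ i, p (z i)) (fun z => VarP p (fun v => f (Fin.cons v z)))
        + VarP (fun z : Fin k → V => ∏ i, p (z i)) (fun z => EXp p (fun v => f (Fin.cons v z))) := by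
  simp only [VarP, EXp_pi_succ p, EXp_sub]
  ring

theorem VarP_pi_le_sum_EXp_VarP_update {p : V → ℝ} (hp : ∀ v, 0 ≤ p v) (hp1 : ∑ v, p v = 1)
    (k : ℕ) (f : (Fin k → V) → ℝ) :
    VarP (fun x : Fin k → V => ∏ i, p (x i)) f ≤
      ∑ j : Fin k, EXp (fun x : Fin k → V => ∏ i, p (x i))
        (fun x => VarP p (fun y => f (Function.update x j y))) := by
  induction k with
  | zero => simp [VarP, EXp]
  | succ k ih =>
    set P : (Fin k → V) → ℝ := fun z => ∏ i, p (z i)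
    have hP : ∀ z, 0 ≤ P z := fun z => prod_nonneg fun i _ => hp (z i)
    set g : (Fin k → V) → ℝ := fun z => EXp p (fun v => f (Fin.cons v z))
    have first_coord : EXp P (fun z => VarP p (fun v => f (Fin.cons v z)))
        = EXp (fun x : Fin (k + 1) → V => ∏ i, p (x i))
            (fun x => VarP p (fun y => f (Function.update x 0 y))) := by
      simp only [EXp_pi_succ p, Fin.update_cons_zero, EXp_const hp1, P]
    have other_coord : ∀ i : Fin k,
        EXp P (fun z => VarP p (fun y => g (Function.update z i y)))
          ≤ EXp (fun x : Fin (k + 1) → V => ∏ i, p (x i))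
              (fun x => VarP p (fun y => f (Function.update x i.succ y))) := by
      intro i
      rw [EXp_pi_succ p]
      refine EXp_mono hP fun z => ?_
      simp only [← Fin.cons_update]
      exact VarP_EXp_le_EXp_VarP hp hp1 hp hp1 fun v y => f (Fin.cons v (Function.update z i y))
    calc VarP (fun x : Fin (k + 1) → V => ∏ i, p (x i)) f
        = EXp P (fun z => VarP p (fun v => f (Fin.cons v z))) + VarP P g := VarP_pi_succ p f
      _ ≤ EXp P (fun z => VarP p (fun v => f (Fin.cons v z)))
            + ∑ i : Fin k, EXp P (fun z => VarP p (fun y => g (Function.update z i y))) :=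
          by gcongr; exact ih g
      _ ≤ _ := by
          rw [Fin.sum_univ_succ, first_coord]
          gcongr with i
          exact other_coord i

end Product

/-- **Efron–Stein subadditivity of variance.** For `f` on a finite product
space `V^k` with independent coordinates, `∑_j E[Var_{x_j} f] ≥ Var(f)`. -/
theorem stmt_1 {V : Type*} [Fintype V] (k : ℕ)
    (p : V → ℝ) (hp : ∀ v, 0 ≤ p v) (hp1 : ∑ v, p v = 1)
    (f : (Fin k → V) → ℝ) :
    ∑ j : Fin k,
      EXp (fun x : Fin k → V => ∏ i, p (x i))
        (fun x => VarP p (fun y => f (Function.update x j y))) ≥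
    VarP (fun x : Fin k → V => ∏ i, p (x i)) f :=
  VarP_pi_le_sum_EXp_VarP_update hp hp1 k f
end

section
/- The conductance of the k-fold Cartesian power satisfies Φ(G^{□k}) = Φ(G)/k for any finite regular graph G. -/
open Finset BigOperators
open scoped Classical

/-- Expectation of `f` under the uniform measure on a finite type. -/
noncomputable def expec {V : Type*} [Fintype V] (f : V → ℝ) : ℝ :=
  (∑ x, f x) / (Fintype.card V : ℝ)

/-- Variance of `f` under the uniform measure. -/
noncomputable def varE {V : Type*} [Fintype V] (f : V → ℝ) : ℝ :=
  expec (fun x => f x ^ 2) - (expec f) ^ 2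

/-- The Laplacian quadratic form `⟨f, L_G f⟩ = (1/2)·E_{(x,y)∈E}[(f x − f y)²]` for a
`d`-regular graph `G`, with the uniform measure on (ordered) edges. -/
noncomputable def qform {V : Type*} [Fintype V] (G : SimpleGraph V) (d : ℕ)
    (f : V → ℝ) : ℝ :=
  (∑ x, ∑ y, if G.Adj x y then (f x - f y) ^ 2 else 0) /
    (2 * (d : ℝ) * (Fintype.card V : ℝ))

/-- The `k`-fold Cartesian power `G^{□k}` of a graph `G`. -/
def cartPow {V : Type*} (G : SimpleGraph V) (k : ℕ) : SimpleGraph (Fin k → V) where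
  Adj x y := ∃ j, G.Adj (x j) (y j) ∧ ∀ l, l ≠ j → x l = y l
  symm := by
    constructor
    rintro x y ⟨j, hadj, h⟩
    exact ⟨j, hadj.symm, fun l hl => (h l hl).symm⟩
  loopless := by
    constructor
    rintro x ⟨j, hadj, -⟩
    exact G.loopless.irrefl _ hadj

/-- The influence `⟨f, L_j f⟩` of coordinate `j` for a function on `V(G)^k`,
where `L_j` is the directional Laplacian of the `j`-th copy of the `d`-regular graph `G`. -/
noncomputable def influence {V : Type*} [Fintype V] [DecidableEq V] (G : SimpleGraph V)
    (d : ℕ) (k : ℕ) (f : (Fin k → V) → ℝ) (j : Fin k) : ℝ :=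
  (∑ x : Fin k → V, ∑ y : V,
      if G.Adj (x j) y then (f x - f (Function.update x j y)) ^ 2 else 0) /
    (2 * (d : ℝ) * ((Fintype.card V : ℝ)) ^ k)

/-- `Var_j(f) = ⟨f, K_j f⟩`: the expected conditional variance of `f` along coordinate `j`. -/
noncomputable def varAlong {V : Type*} [Fintype V] [DecidableEq V] (k : ℕ)
    (f : (Fin k → V) → ℝ) (j : Fin k) : ℝ :=
  expec (fun x : Fin k → V =>
    expec (fun y : V => f (Function.update x j y) ^ 2) -
      (expec (fun y : V => f (Function.update x j y))) ^ 2)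

/-- `Ent(f²) = E[f² log f²] − E[f²]·log E[f²]` under the uniform measure. -/
noncomputable def ent {V : Type*} [Fintype V] (f : V → ℝ) : ℝ :=
  expec (fun x => f x ^ 2 * Real.log (f x ^ 2)) -
    expec (fun x => f x ^ 2) * Real.log (expec (fun x => f x ^ 2))

/-- The set of constants `a` satisfying the log-Sobolev inequality
`⟨f, L_G f⟩ ≥ (a/2)·Ent(f²)` for all `f`; the log-Sobolev constant is its greatest element. -/
def lsSet {V : Type*} [Fintype V] (G : SimpleGraph V) (d : ℕ) : Set ℝ :=
  {a | ∀ f : V → ℝ, qform G d f ≥ a / 2 * ent f}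

/-- The conductance `Φ(G) = min over Boolean f of ⟨f, L_G f⟩ / (2 Var f)`. -/
noncomputable def conductance {V : Type*} [Fintype V] (G : SimpleGraph V) (d : ℕ) : ℝ :=
  sInf {r | ∃ f : V → ℝ, (∀ x, f x = 1 ∨ f x = -1) ∧ varE f ≠ 0 ∧
    r = qform G d f / (2 * varE f)}

/-!
Restricting a Boolean function on `G` to one coordinate of `G^{□k}` keeps its variance and divides
its Dirichlet form by `k`, so `Φ(G^{□k}) ≤ Φ(G)/k`. Conversely, for Boolean `f` on `G^{□k}` every
line of `f` in direction `j` is Boolean on `G`, so `⟨f, L_j f⟩ ≥ 2 Φ(G) E[Var_j f]`; summing over `j`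
and using the Efron–Stein inequality `Var f ≤ ∑ⱼ E[Var_j f]` gives
`k ⟨f, L f⟩ = ∑ⱼ ⟨f, L_j f⟩ ≥ 2 Φ(G) Var f`.
-/

section Expectation

variable {α β : Type*} [Fintype α] [Fintype β]

lemma expec_eq_expect (f : α → ℝ) : expec f = 𝔼 a, f a :=
  (Fintype.expect_eq_sum_div_card f).symm

lemma expec_const [Nonempty α] (c : ℝ) : expec (fun _ : α => c) = c := by
  simp [expec_eq_expect]

lemma expec_sub (f g : α → ℝ) : expec (fun a => f a - g a) = expec f - expec g := by
  simp only [expec_eq_expect, expect_sub_distrib]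

lemma expec_const_mul (c : ℝ) (f : α → ℝ) : expec (fun a => c * f a) = c * expec f := by
  simp only [expec_eq_expect, mul_expect]

lemma expec_mono {f g : α → ℝ} (h : ∀ a, f a ≤ g a) : expec f ≤ expec g := by
  simp only [expec_eq_expect]
  exact expect_le_expect fun a _ => h a

lemma expec_nonneg {f : α → ℝ} (h : ∀ a, 0 ≤ f a) : 0 ≤ expec f := by
  simp only [expec_eq_expect]
  exact expect_nonneg fun a _ => h a

lemma expec_comp_equiv (e : α ≃ β) (f : β → ℝ) : expec (fun a => f (e a)) = expec f := by
  simp only [expec_eq_expect]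
  exact Fintype.expect_equiv e _ _ fun _ => rfl

lemma expec_prod (q : α → β → ℝ) :
    expec (fun p : α × β => q p.1 p.2) = expec (fun a => expec (q a)) := by
  simp only [expec_eq_expect, ← expect_product', univ_product_univ]

lemma expec_comm (q : α → β → ℝ) :
    expec (fun a => expec (q a)) = expec (fun b => expec (fun a => q a b)) := by
  simp only [expec_eq_expect]
  exact expect_comm _ _ _

end Expectation

section Variance

variable {α β : Type*} [Fintype α] [Fintype β]

lemma varE_eq_expec_sq_sub [Nonempty α] (f : α → ℝ) :
    varE f = expec (fun a => (f a - expec f) ^ 2) := by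
  simp only [varE, expec_eq_expect, sub_sq, expect_add_distrib, expect_sub_distrib,
    Fintype.expect_const]
  rw [← expect_mul, ← mul_expect]
  ring

lemma varE_nonneg [Nonempty α] (f : α → ℝ) : 0 ≤ varE f := by
  rw [varE_eq_expec_sq_sub]
  exact expec_nonneg fun _ => sq_nonneg _

lemma sq_expec_le [Nonempty α] (f : α → ℝ) : expec f ^ 2 ≤ expec (fun a => f a ^ 2) :=
  sub_nonneg.mp (varE_nonneg f)

lemma varE_comp_equiv (e : α ≃ β) (f : β → ℝ) : varE (fun a => f (e a)) = varE f := by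
  simp only [varE, expec_comp_equiv e f, expec_comp_equiv e (fun b => f b ^ 2)]

lemma varE_prod (q : α → β → ℝ) :
    varE (fun p : α × β => q p.1 p.2) =
      expec (fun b => varE (fun a => q a b)) + varE (fun b => expec (fun a => q a b)) := by
  simp only [varE]
  rw [expec_prod q, expec_prod (fun a b => q a b ^ 2), expec_comm q,
    expec_comm (fun a b => q a b ^ 2), expec_sub]
  ring

lemma varE_expec_le [Nonempty α] [Nonempty β] (q : α → β → ℝ) :
    varE (fun b => expec (fun a => q a b)) ≤ expec (fun a => varE (q a)) := by
  have hmean : expec (fun b => expec (fun a => q a b)) = expec (fun a => expec (q a)) :=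
    (expec_comm q).symm
  calc varE (fun b => expec (fun a => q a b))
      = expec (fun b => expec (fun a => q a b - expec (q a)) ^ 2) := by
        simp only [varE_eq_expec_sq_sub, hmean, expec_sub]
    _ ≤ expec (fun b => expec (fun a => (q a b - expec (q a)) ^ 2)) :=
        expec_mono fun b => sq_expec_le _
    _ = expec (fun a => varE (q a)) := by
        rw [← expec_comm]
        simp only [varE_eq_expec_sq_sub]

end Variance

section Coordinates

variable {α : Type*} [Fintype α] {k : ℕ}

lemma expec_fin_succ (f : (Fin (k + 1) → α) → ℝ) :
    expec f = expec (fun v => expec (fun x => f (Fin.cons v x))) := by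
  rw [← expec_comp_equiv (Fin.consEquiv fun _ => α) f]
  exact expec_prod fun v x => f (Fin.cons v x)

lemma varE_fin_succ (f : (Fin (k + 1) → α) → ℝ) :
    varE f = expec (fun x => varE (fun v => f (Fin.cons v x))) +
      varE (fun x => expec (fun v => f (Fin.cons v x))) := by
  rw [← varE_comp_equiv (Fin.consEquiv fun _ => α) f]
  exact varE_prod fun v x => f (Fin.cons v x)

lemma expec_update_eq [Nonempty α] (j : Fin k) (F : (Fin k → α) → ℝ) :
    expec (fun x => expec (fun u => F (Function.update x j u))) = expec F := by
  have hinv :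
      Function.Involutive fun p : (Fin k → α) × α => (Function.update p.1 j p.2, p.1 j) := by
    rintro ⟨x, u⟩
    simp
  rw [← expec_prod fun x u => F (Function.update x j u),
    ← expec_comp_equiv (hinv.toPerm _) fun p => F (Function.update p.1 j p.2)]
  simpa [expec_const] using expec_prod fun x (_ : α) => F x

lemma expec_comp_eval [Nonempty α] (h : α → ℝ) (j : Fin k) :
    expec (fun x : Fin k → α => h (x j)) = expec h := by
  rw [← expec_update_eq j]
  simp [expec_const]

lemma varE_comp_eval [Nonempty α] (h : α → ℝ) (j : Fin k) :
    varE (fun x : Fin k → α => h (x j)) = varE h := by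
  simp only [varE, expec_comp_eval h j, expec_comp_eval (fun v => h v ^ 2) j]

end Coordinates

section EfronStein

variable {α : Type*} [Fintype α] [DecidableEq α] {k : ℕ}

lemma varAlong_eq_expec_varE (f : (Fin k → α) → ℝ) (j : Fin k) :
    varAlong k f j = expec (fun x => varE (fun v => f (Function.update x j v))) :=
  rfl

lemma varAlong_zero [Nonempty α] (f : (Fin (k + 1) → α) → ℝ) :
    varAlong (k + 1) f 0 = expec (fun x => varE (fun v => f (Fin.cons v x))) := by
  rw [varAlong_eq_expec_varE, expec_fin_succ]
  simp [Fin.update_cons_zero, expec_const]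

lemma varAlong_succ (f : (Fin (k + 1) → α) → ℝ) (j : Fin k) :
    varAlong (k + 1) f j.succ = expec (fun v => varAlong k (fun x => f (Fin.cons v x)) j) := by
  simp only [varAlong_eq_expec_varE]
  rw [expec_fin_succ]
  simp [← Fin.cons_update]

lemma varAlong_expec_le [Nonempty α] {β : Type*} [Fintype β] [Nonempty β]
    (g : β → (Fin k → α) → ℝ) (j : Fin k) :
    varAlong k (fun x => expec (fun b => g b x)) j ≤ expec (fun b => varAlong k (g b) j) := by
  simp only [varAlong_eq_expec_varE]
  rw [expec_comm]
  exact expec_mono fun x => varE_expec_le fun b v => g b (Function.update x j v)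

theorem varE_le_sum_varAlong [Nonempty α] :
    ∀ {k : ℕ} (f : (Fin k → α) → ℝ), varE f ≤ ∑ j, varAlong k f j
  | 0, f => by simp [varE, expec_eq_expect]
  | k + 1, f => by
    rw [varE_fin_succ, Fin.sum_univ_succ, varAlong_zero]
    gcongr
    calc varE (fun x => expec (fun v => f (Fin.cons v x)))
        ≤ ∑ j : Fin k, varAlong k (fun x => expec (fun v => f (Fin.cons v x))) j :=
          varE_le_sum_varAlong _
      _ ≤ ∑ j : Fin k, varAlong (k + 1) f j.succ := by
          gcongr with j
          rw [varAlong_succ]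
          exact varAlong_expec_le (fun v x => f (Fin.cons v x)) j

end EfronStein

section CartesianPower

lemma ite_cartPow_adj {V : Type*} {k : ℕ} (G : SimpleGraph V) (x y : Fin k → V) (c : ℝ) :
    (if (cartPow G k).Adj x y then c else 0) =
      ∑ j, if G.Adj (x j) (y j) ∧ ∀ l, l ≠ j → x l = y l then c else 0 := by
  by_cases hxy : (cartPow G k).Adj x y
  · obtain ⟨j, hj, hrest⟩ := hxy
    rw [if_pos ⟨j, hj, hrest⟩, Finset.sum_eq_single j (fun i _ hij => if_neg ?_) (by simp),
      if_pos ⟨hj, hrest⟩]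
    exact fun ⟨hi, _⟩ => hi.ne (hrest i hij)
  · rw [if_neg hxy, eq_comm]
    exact Finset.sum_eq_zero fun j _ => if_neg fun ⟨hj, hrest⟩ => hxy ⟨j, hj, hrest⟩

variable {V : Type*} [Fintype V] {k : ℕ}

lemma sum_agree_off_eq_sum_update (x : Fin k → V) (j : Fin k) (p : V → Prop) [DecidablePred p]
    (H : (Fin k → V) → ℝ) :
    ∑ y, (if p (y j) ∧ ∀ l, l ≠ j → x l = y l then H y else 0) =
      ∑ v, if p v then H (Function.update x j v) else 0 := by
  rw [← Finset.sum_filter, ← Finset.sum_filter]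
  have : Finset.univ.filter (fun y : Fin k → V => p (y j) ∧ ∀ l, l ≠ j → x l = y l) =
      (Finset.univ.filter p).map ⟨Function.update x j, Function.update_injective x j⟩ := by
    ext y
    simp only [Finset.mem_filter, Finset.mem_univ, true_and, Finset.mem_map,
      Function.Embedding.coeFn_mk]
    constructor
    · rintro ⟨hy, hrest⟩
      refine ⟨y j, hy, funext fun l => ?_⟩
      by_cases hl : l = j
      · subst hl; simp
      · simp [hl, hrest l hl]
    · rintro ⟨v, hv, rfl⟩
      exact ⟨by simpa using hv, fun l hl => by simp [hl]⟩
  rw [this, Finset.sum_map]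
  rfl

lemma sum_adj_cartPow (G : SimpleGraph V) (F : (Fin k → V) → (Fin k → V) → ℝ) :
    ∑ x, ∑ y, (if (cartPow G k).Adj x y then F x y else 0) =
      ∑ j, ∑ x, ∑ v, if G.Adj (x j) v then F x (Function.update x j v) else 0 := by
  conv_rhs => rw [Finset.sum_comm]
  refine Finset.sum_congr rfl fun x _ => ?_
  simp_rw [ite_cartPow_adj]
  rw [Finset.sum_comm]
  exact Finset.sum_congr rfl fun j _ => sum_agree_off_eq_sum_update x j (G.Adj (x j)) (F x)

lemma qform_cartPow [DecidableEq V] (G : SimpleGraph V) (d : ℕ) (f : (Fin k → V) → ℝ) :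
    qform (cartPow G k) (k * d) f = (∑ j, influence G d k f j) / k := by
  simp only [qform, influence, sum_adj_cartPow, ← Finset.sum_div, div_div, Fintype.card_fun,
    Fintype.card_fin]
  push_cast
  ring

lemma influence_eq_expec_qform [Nonempty V] [DecidableEq V] (G : SimpleGraph V) (d : ℕ)
    (f : (Fin k → V) → ℝ) (j : Fin k) :
    influence G d k f j = expec (fun x => qform G d (fun v => f (Function.update x j v))) := by
  set F : (Fin k → V) → ℝ := fun x =>
    (∑ v, if G.Adj (x j) v then (f x - f (Function.update x j v)) ^ 2 else 0) / (2 * d)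
  have hline : ∀ x, qform G d (fun v => f (Function.update x j v)) =
      expec (fun u => F (Function.update x j u)) := by
    intro x
    simp only [qform, expec, F, Function.update_self, Function.update_idem, ← Finset.sum_div,
      div_div]
  simp only [hline]
  rw [expec_update_eq]
  simp only [influence, expec, F, ← Finset.sum_div, div_div, Fintype.card_fun, Fintype.card_fin]
  push_cast
  ring

end CartesianPower

section Conductance

variable {V : Type*} [Fintype V] [Nonempty V]

lemma varE_ne_zero_of_ne {f : V → ℝ} {a b : V} (h : f a ≠ f b) : varE f ≠ 0 := by
  intro hvar
  rw [varE_eq_expec_sq_sub, expec_eq_expect,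
    Fintype.expect_eq_zero_iff_of_nonneg fun _ => sq_nonneg _] at hvar
  have hcentered (x : V) : f x = expec f := by
    simpa [sub_eq_zero] using congrFun hvar x
  exact h ((hcentered a).trans (hcentered b).symm)

lemma qform_nonneg (G : SimpleGraph V) (d : ℕ) (g : V → ℝ) : 0 ≤ qform G d g := by
  unfold qform
  positivity

lemma qform_div_varE_nonneg (G : SimpleGraph V) (d : ℕ) (g : V → ℝ) :
    0 ≤ qform G d g / (2 * varE g) :=
  div_nonneg (qform_nonneg G d g) (mul_nonneg zero_le_two (varE_nonneg g))

lemma conductance_le (G : SimpleGraph V) (d : ℕ) {g : V → ℝ} (hg : ∀ x, g x = 1 ∨ g x = -1)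
    (hvar : varE g ≠ 0) : conductance G d ≤ qform G d g / (2 * varE g) := by
  refine csInf_le ⟨0, ?_⟩ ⟨g, hg, hvar, rfl⟩
  rintro _ ⟨f, -, -, rfl⟩
  exact qform_div_varE_nonneg G d f

lemma le_conductance [Nontrivial V] (G : SimpleGraph V) (d : ℕ) {c : ℝ}
    (h : ∀ f : V → ℝ, (∀ x, f x = 1 ∨ f x = -1) → varE f ≠ 0 → c ≤ qform G d f / (2 * varE f)) :
    c ≤ conductance G d := by
  obtain ⟨a, b, hab⟩ := exists_pair_ne V
  set g : V → ℝ := fun x => if x = a then 1 else -1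
  have hg : ∀ x, g x = 1 ∨ g x = -1 := fun x => by by_cases hx : x = a <;> simp [g, hx]
  have hvar : varE g ≠ 0 := varE_ne_zero_of_ne (a := a) (b := b) (by norm_num [g, hab.symm])
  refine le_csInf ⟨_, g, hg, hvar, rfl⟩ ?_
  rintro _ ⟨f, hf, hvarf, rfl⟩
  exact h f hf hvarf

lemma conductance_nonneg (G : SimpleGraph V) (d : ℕ) : 0 ≤ conductance G d :=
  Real.sInf_nonneg fun _ ⟨f, _, _, hr⟩ => hr ▸ qform_div_varE_nonneg G d f

lemma two_mul_conductance_mul_varE_le_qform (G : SimpleGraph V) (d : ℕ) {g : V → ℝ}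
    (hg : ∀ x, g x = 1 ∨ g x = -1) : 2 * conductance G d * varE g ≤ qform G d g := by
  rcases (varE_nonneg g).eq_or_lt with hvar | hvar
  · rw [← hvar, mul_zero]
    exact qform_nonneg G d g
  · have := conductance_le G d hg hvar.ne'
    rw [le_div_iff₀ (by positivity)] at this
    linarith

end Conductance

section ConductanceCartesianPower

variable {V : Type*} [Fintype V] [Nonempty V] {k : ℕ}

lemma qform_cartPow_comp_eval (G : SimpleGraph V) (d : ℕ) (g : V → ℝ) (j₀ : Fin k) :
    qform (cartPow G k) (k * d) (fun x => g (x j₀)) = qform G d g / k := by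
  classical
  rw [qform_cartPow, Finset.sum_eq_single j₀ _ (by simp), influence_eq_expec_qform]
  · simp [expec_const]
  · intro j _ hj
    simp [influence_eq_expec_qform, Function.update_of_ne (Ne.symm hj), qform, expec_const]

lemma two_mul_conductance_mul_varAlong_le_influence [DecidableEq V] (G : SimpleGraph V) (d : ℕ)
    {f : (Fin k → V) → ℝ} (hf : ∀ x, f x = 1 ∨ f x = -1) (j : Fin k) :
    2 * conductance G d * varAlong k f j ≤ influence G d k f j := by
  rw [varAlong_eq_expec_varE, ← expec_const_mul, influence_eq_expec_qform]
  exact expec_mono fun x => two_mul_conductance_mul_varE_le_qform G d fun _ => hf _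

lemma two_mul_conductance_mul_varE_le_sum_influence [DecidableEq V] (G : SimpleGraph V) (d : ℕ)
    {f : (Fin k → V) → ℝ} (hf : ∀ x, f x = 1 ∨ f x = -1) :
    2 * conductance G d * varE f ≤ ∑ j, influence G d k f j :=
  calc 2 * conductance G d * varE f
      ≤ 2 * conductance G d * ∑ j, varAlong k f j := by
        gcongr
        · exact mul_nonneg zero_le_two (conductance_nonneg G d)
        · exact varE_le_sum_varAlong f
    _ ≤ ∑ j, influence G d k f j := by
        rw [Finset.mul_sum]
        gcongr with j
        exact two_mul_conductance_mul_varAlong_le_influence G d hf j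

end ConductanceCartesianPower

theorem stmt_7_general {V : Type*} [Fintype V] [Nontrivial V]
    (G : SimpleGraph V) (d : ℕ)
    (k : ℕ) (hk : 0 < k) :
    conductance (cartPow G k) (k * d) = conductance G d / k := by
  classical
  have hk' : (0 : ℝ) < k := by exact_mod_cast hk
  -- provides `0 : Fin k` and makes `Fin k → V` nontrivial
  have : NeZero k := ⟨hk.ne'⟩
  apply le_antisymm
  · rw [le_div_iff₀ hk']
    refine le_conductance G d fun g hg hvar => ?_
    have := conductance_le (cartPow G k) (k * d) (g := fun x => g (x 0)) (fun _ => hg _)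
      (by rwa [varE_comp_eval])
    rwa [qform_cartPow_comp_eval, varE_comp_eval, div_right_comm, le_div_iff₀ hk'] at this
  · refine le_conductance _ _ fun f hf hvar => ?_
    have hvar_pos : 0 < varE f := (varE_nonneg f).lt_of_ne' hvar
    rw [div_le_div_iff₀ hk' (by positivity), qform_cartPow, div_mul_cancel₀ _ hk'.ne']
    linarith [two_mul_conductance_mul_varE_le_sum_influence G d hf]

/-- The conductance of the `k`-fold Cartesian power satisfies
`Φ(G^{□k}) = Φ(G)/k` for any finite regular graph `G`. -/
theorem stmt_7 {V : Type*} [Fintype V] [DecidableEq V] [Nontrivial V]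
    (G : SimpleGraph V) (d : ℕ) (hd : 0 < d) (hreg : G.IsRegularOfDegree d)
    (k : ℕ) (hk : 0 < k) :
    conductance (cartPow G k) (k * d) = conductance G d / k :=
  stmt_7_general G d k hk
end

section
/- For any probability space and function h with values in ℝ, and any 0 < t ≤ 1/e²: E[h² log h²] ≥ √t log t · E|h| + log t · E[h²]. -/
open Finset BigOperators

/-!
Pointwise, `z log z ≥ √t log t · √z + log t · z` for `z ≥ 0`; taking `z = h²` and averaging
gives the claim. If `z ≤ t`, then `√t log t ≤ √z log z` because `√z log z` is decreasing on
`[0, e⁻²]`, so the first term is at most `z log z`, and the second is `≤ 0` since `log t < 0`.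
If `z > t`, the first term is `≤ 0` and `log t · z ≤ log z · z`.
-/

namespace EXp

variable {X : Type*} [Fintype X]

theorem add (p f g : X → ℝ) : EXp p (fun x => f x + g x) = EXp p f + EXp p g := by
  simp only [EXp, mul_add, sum_add_distrib]

theorem const_mul (p f : X → ℝ) (c : ℝ) : EXp p (fun x => c * f x) = c * EXp p f := by
  simp only [EXp, mul_sum]
  exact sum_congr rfl fun _ _ => by ring

theorem mono {p f g : X → ℝ} (hp : ∀ x, 0 ≤ p x) (hfg : ∀ x, f x ≤ g x) :
    EXp p f ≤ EXp p g :=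
  sum_le_sum fun x _ => mul_le_mul_of_nonneg_left (hfg x) (hp x)

end EXp

namespace Real

theorem sqrt_mul_log_antitoneOn :
    AntitoneOn (fun z : ℝ => √z * log z) (Set.Icc 0 (exp (-2))) := by
  have hsqrt : ∀ z ∈ Set.Icc 0 (exp (-2)), √z ∈ Set.Icc 0 (exp (-1)) := fun z hz =>
    ⟨sqrt_nonneg z, by
      rw [show exp (-1) = √(exp (-2)) by rw [← exp_half]; norm_num]
      exact sqrt_le_sqrt hz.2⟩
  have hdouble : ∀ z, 0 ≤ z → √z * log z = 2 * (√z * log √z) := fun z hz => by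
    rw [log_sqrt hz]; ring
  intro a ha b hb hab
  simp only [hdouble a ha.1, hdouble b hb.1]
  exact mul_le_mul_of_nonneg_left
    (mul_log_strictAntiOn.antitoneOn (hsqrt a ha) (hsqrt b hb) (sqrt_le_sqrt hab)) zero_le_two

theorem sqrt_mul_log_mul_sqrt_add_log_mul_le {t z : ℝ} (ht0 : 0 < t) (ht : t ≤ exp (-2))
    (hz : 0 ≤ z) : √t * log t * √z + log t * z ≤ z * log z := by
  have hlog : log t ≤ 0 := log_nonpos ht0.le (ht.trans (exp_le_one_iff.mpr (by norm_num)))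
  rcases le_or_gt z t with hzt | htz
  · have hmono : √t * log t ≤ √z * log z :=
      sqrt_mul_log_antitoneOn ⟨hz, hzt.trans ht⟩ ⟨ht0.le, ht⟩ hzt
    calc √t * log t * √z + log t * z ≤ √z * log z * √z + 0 := by
          gcongr
          exact mul_nonpos_of_nonpos_of_nonneg hlog hz
      _ = z * log z := by rw [add_zero, mul_right_comm, mul_self_sqrt hz]
  · have hfirst : √t * log t * √z ≤ 0 :=
      mul_nonpos_of_nonpos_of_nonneg (mul_nonpos_of_nonneg_of_nonpos (sqrt_nonneg t) hlog)
        (sqrt_nonneg z)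
    have hsecond : log t * z ≤ log z * z := mul_le_mul_of_nonneg_right (log_le_log ht0 htz.le) hz
    linarith

end Real

theorem stmt_11_general {X : Type*} [Fintype X]
    (p : X → ℝ) (hp : ∀ x, 0 ≤ p x)
    (h : X → ℝ) (t : ℝ) (ht0 : 0 < t) (ht : t ≤ 1 / Real.exp 2) :
    EXp p (fun x => h x ^ 2 * Real.log (h x ^ 2)) ≥
      Real.sqrt t * Real.log t * EXp p (fun x => |h x|) +
        Real.log t * EXp p (fun x => h x ^ 2) := by
  have ht' : t ≤ Real.exp (-2) := by rwa [Real.exp_neg, ← one_div]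
  have hpointwise : ∀ x, Real.sqrt t * Real.log t * |h x| + Real.log t * h x ^ 2 ≤
      h x ^ 2 * Real.log (h x ^ 2) := fun x => by
    simpa only [Real.sqrt_sq_eq_abs] using
      Real.sqrt_mul_log_mul_sqrt_add_log_mul_le ht0 ht' (sq_nonneg (h x))
  rw [← EXp.const_mul, ← EXp.const_mul, ← EXp.add]
  exact EXp.mono hp hpointwise

/-- On any finite probability space, for any `h` and `0 < t ≤ 1/e²`:
`E[h² log h²] ≥ √t log t · E|h| + log t · E[h²]`. -/
theorem stmt_11 {X : Type*} [Fintype X]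
    (p : X → ℝ) (hp : ∀ x, 0 ≤ p x) (hp1 : ∑ x, p x = 1)
    (h : X → ℝ) (t : ℝ) (ht0 : 0 < t) (ht : t ≤ 1 / Real.exp 2) :
    EXp p (fun x => h x ^ 2 * Real.log (h x ^ 2)) ≥
      Real.sqrt t * Real.log t * EXp p (fun x => |h x|) +
        Real.log t * EXp p (fun x => h x ^ 2) :=
  stmt_11_general p hp h t ht0 ht
end

section
/- If {v_u}_{u∈V(G)} is a feasible solution to the standard Sparsest Cut SDP for G with objective value Opt, then the vectors v_x = (1/√k)(v_{x_1} ⊕ ... ⊕ v_{x_k}) for x ∈ V(G)^k (suitably normalized) give a feasible solution for G^{□k} with objective value Opt/k; in particular the SDP optimum satisfies Opt(G^{□k}) ≤ Opt(G)/k. -/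
/-!
For `w = scaledDirectSum v k` one has `‖w x - w y‖² = (1/k) ∑ⱼ ‖v (x j) - v (y j)‖²`, and an
edge of `G^{□k}` in direction `j` changes only `x j`, so its squared length is
`‖v (x j) - v b‖² / k`. Each coordinate of a uniformly random `x : Fin k → V` is uniform on `V`,
so by linearity of expectation the average spread of `w` equals that of `v`, while the average
over edges drops by the factor `k`. An isometry onto `EuclideanSpace ℝ (Fin N)` turns `w` into
a feasible solution of the SDP for `G^{□k}`, which bounds the infimum by `Opt / k`.
-/

open Finset BigOperators
open scoped Classical

theorem Fintype.sum_sum_div_card_sq {α K : Type*} [Fintype α] [Semifield K] [CharZero K]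
    (f : α → α → K) :
    (∑ x, ∑ y, f x y) / (Fintype.card α : K) ^ 2 = 𝔼 x, 𝔼 y, f x y := by
  simp only [Fintype.expect_eq_sum_div_card, ← Finset.sum_div, div_div, sq]

section UniformMarginal

variable {ι V M : Type*} [Fintype ι] [DecidableEq ι] [Fintype V] [AddCommMonoid M]
  [Module ℚ≥0 M]

theorem Fintype.expect_comp_eval (j : ι) (g : V → M) :
    𝔼 x : ι → V, g (x j) = 𝔼 a, g a := by
  cases isEmpty_or_nonempty V
  · have : IsEmpty (ι → V) := ⟨fun x => isEmptyElim (x j)⟩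
    simp [Finset.univ_eq_empty]
  calc 𝔼 x : ι → V, g (x j)
      = 𝔼 p : V × ({i // i ≠ j} → V), g p.1 :=
        Fintype.expect_equiv (Equiv.funSplitAt j V) _ _ fun _ => rfl
    _ = 𝔼 a, 𝔼 _r : {i // i ≠ j} → V, g a := by
        rw [← Finset.expect_product' univ univ fun a _ => g a, Finset.univ_product_univ]
    _ = 𝔼 a, g a := by simp only [Fintype.expect_const]

theorem Fintype.expect_expect_comp_eval (j : ι) (f : V → V → M) :
    𝔼 x : ι → V, 𝔼 y : ι → V, f (x j) (y j) = 𝔼 a, 𝔼 b, f a b := by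
  rw [← Fintype.expect_comp_eval j fun a => 𝔼 b, f a b]
  exact Finset.expect_congr rfl fun x _ => Fintype.expect_comp_eval j (f (x j))

theorem Fintype.expect_sum_comp_eval (f : ι → V → M) :
    𝔼 x : ι → V, ∑ j, f j (x j) = ∑ j, 𝔼 a, f j a := by
  rw [Finset.expect_sum_comm]
  exact Finset.sum_congr rfl fun j _ => Fintype.expect_comp_eval j (f j)

end UniformMarginal

section ScaledDirectSum

variable {V E : Type*} [SeminormedAddCommGroup E] [NormedSpace ℝ E] {k : ℕ}

noncomputable def scaledDirectSum (v : V → E) (k : ℕ) (x : Fin k → V) :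
    PiLp 2 (fun _ : Fin k => E) :=
  (Real.sqrt k)⁻¹ • WithLp.toLp 2 (fun j => v (x j))

theorem norm_scaledDirectSum_sub_sq (v : V → E) (x y : Fin k → V) :
    ‖scaledDirectSum v k x - scaledDirectSum v k y‖ ^ 2 =
      (∑ j, ‖v (x j) - v (y j)‖ ^ 2) / k := by
  rw [scaledDirectSum, scaledDirectSum, ← smul_sub, norm_smul, mul_pow, ← WithLp.toLp_sub,
    PiLp.norm_sq_eq_of_L2, norm_inv, Real.norm_of_nonneg (Real.sqrt_nonneg _), inv_pow,
    Real.sq_sqrt k.cast_nonneg, inv_mul_eq_div]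
  rfl

theorem norm_scaledDirectSum_sub_update_sq (v : V → E) (x : Fin k → V)
    (j : Fin k) (a : V) :
    ‖scaledDirectSum v k x - scaledDirectSum v k (Function.update x j a)‖ ^ 2 =
      ‖v (x j) - v a‖ ^ 2 / k := by
  rw [norm_scaledDirectSum_sub_sq, Finset.sum_eq_single j (fun l _ hl => by simp [hl])
    (by simp), Function.update_self]

variable [Fintype V]

theorem expect_expect_norm_scaledDirectSum_sub_sq (hk : k ≠ 0) (v : V → E) :
    𝔼 x, 𝔼 y, ‖scaledDirectSum v k x - scaledDirectSum v k y‖ ^ 2 =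
      𝔼 a, 𝔼 b, ‖v a - v b‖ ^ 2 := by
  calc 𝔼 x, 𝔼 y, ‖scaledDirectSum v k x - scaledDirectSum v k y‖ ^ 2
      = (∑ j, 𝔼 x : Fin k → V, 𝔼 y : Fin k → V, ‖v (x j) - v (y j)‖ ^ 2) / k := by
        simp only [norm_scaledDirectSum_sub_sq, ← Finset.expect_div, Finset.expect_sum_comm]
    _ = (∑ _j : Fin k, 𝔼 a, 𝔼 b, ‖v a - v b‖ ^ 2) / k := by
        simp only [Fintype.expect_expect_comp_eval _ fun a b => ‖v a - v b‖ ^ 2]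
    _ = 𝔼 a, 𝔼 b, ‖v a - v b‖ ^ 2 := by simp [hk]

theorem expect_sum_adj_norm_scaledDirectSum_sub_sq (hk : k ≠ 0) (G : SimpleGraph V)
    [DecidableRel G.Adj] (v : V → E) :
    𝔼 x, ∑ p : Fin k × V, (if G.Adj (x p.1) p.2 then
        ‖scaledDirectSum v k x - scaledDirectSum v k (Function.update x p.1 p.2)‖ ^ 2 else 0) =
      𝔼 a, ∑ b, if G.Adj a b then ‖v a - v b‖ ^ 2 else 0 := by
  set h : V → ℝ := fun a => ∑ b, if G.Adj a b then ‖v a - v b‖ ^ 2 else 0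
  calc _ = 𝔼 x : Fin k → V, (∑ j, h (x j)) / k := by
        refine Finset.expect_congr rfl fun x _ => ?_
        simp only [Fintype.sum_prod_type, h, Finset.sum_div]
        refine Finset.sum_congr rfl fun j _ => Finset.sum_congr rfl fun b _ => ?_
        split_ifs <;> simp [norm_scaledDirectSum_sub_update_sq]
    _ = (∑ _j : Fin k, 𝔼 a, h a) / k := by
        rw [← Finset.expect_div, Fintype.expect_sum_comp_eval]
    _ = 𝔼 a, h a := by simp [hk]

end ScaledDirectSum

theorem stmt_15_general {V : Type*} [Fintype V]
    (G : SimpleGraph V) (d : ℕ)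
    (m : ℕ) (v : V → EuclideanSpace ℝ (Fin m))
    (hfeas : (∑ x, ∑ y, ‖v x - v y‖ ^ 2) / ((Fintype.card V : ℝ) ^ 2) = 1)
    (Opt : ℝ)
    (hobj : (∑ x, ∑ y, if G.Adj x y then ‖v x - v y‖ ^ 2 else 0) /
        ((d : ℝ) * (Fintype.card V : ℝ)) = Opt)
    (k : ℕ) (hk : 0 < k) :
    (∀ w : (Fin k → V) → PiLp 2 (fun _ : Fin k => EuclideanSpace ℝ (Fin m)),
      (w = fun x => (Real.sqrt k)⁻¹ •
          (WithLp.equiv 2 (Fin k → EuclideanSpace ℝ (Fin m))).symm (fun j => v (x j))) →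
      ((∑ x : Fin k → V, ∑ y : Fin k → V, ‖w x - w y‖ ^ 2) /
          (((Fintype.card V : ℝ) ^ k) ^ 2) = 1 ∧
        (∑ x : Fin k → V, ∑ p : Fin k × V,
            if G.Adj (x p.1) p.2 then ‖w x - w (Function.update x p.1 p.2)‖ ^ 2 else 0) /
          ((k : ℝ) * d * (Fintype.card V : ℝ) ^ k) = Opt / k)) ∧
    sInf {r : ℝ | ∃ (m' : ℕ) (u : (Fin k → V) → EuclideanSpace ℝ (Fin m')),
        (∑ x : Fin k → V, ∑ y : Fin k → V, ‖u x - u y‖ ^ 2) /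
          (((Fintype.card V : ℝ) ^ k) ^ 2) = 1 ∧
        r = (∑ x : Fin k → V, ∑ p : Fin k × V,
            if G.Adj (x p.1) p.2 then ‖u x - u (Function.update x p.1 p.2)‖ ^ 2 else 0) /
          ((k : ℝ) * d * (Fintype.card V : ℝ) ^ k)} ≤ Opt / k := by
  set w := scaledDirectSum v k
  have hcard : (Fintype.card V : ℝ) ^ k = Fintype.card (Fin k → V) := by simp
  have feasible : (∑ x, ∑ y, ‖w x - w y‖ ^ 2) / ((Fintype.card V : ℝ) ^ k) ^ 2 = 1 := by
    rw [hcard, Fintype.sum_sum_div_card_sq, expect_expect_norm_scaledDirectSum_sub_sq hk.ne',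
      ← Fintype.sum_sum_div_card_sq, hfeas]
  have objective : (∑ x, ∑ p : Fin k × V,
      if G.Adj (x p.1) p.2 then ‖w x - w (Function.update x p.1 p.2)‖ ^ 2 else 0) /
        ((k : ℝ) * d * (Fintype.card V : ℝ) ^ k) = Opt / k := by
    rw [← hobj, hcard, mul_comm, ← div_div, ← Fintype.expect_eq_sum_div_card,
      expect_sum_adj_norm_scaledDirectSum_sub_sq hk.ne', Fintype.expect_eq_sum_div_card]
    ring
  refine ⟨fun _ hw => hw ▸ ⟨feasible, objective⟩, csInf_le ⟨0, ?_⟩ ?_⟩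
  · rintro r ⟨m', u, -, rfl⟩
    positivity
  · let e := (stdOrthonormalBasis ℝ (PiLp 2 fun _ : Fin k => EuclideanSpace ℝ (Fin m))).repr
    refine ⟨_, fun x => e (w x), ?_⟩
    simp only [← map_sub, LinearIsometryEquiv.norm_map]
    exact ⟨feasible, objective.symm⟩

/-- A feasible solution `{v_u}` of the standard Sparsest Cut SDP for `G`
with objective value `Opt` yields, via `w_x = (1/√k)(v_{x_1} ⊕ ⋯ ⊕ v_{x_k})`, a feasible
solution for `G^{□k}` with objective value `Opt/k`; in particular the SDP optimum
satisfies `Opt(G^{□k}) ≤ Opt(G)/k`. -/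
theorem stmt_15 {V : Type*} [Fintype V] [DecidableEq V] [Nonempty V]
    (G : SimpleGraph V) (d : ℕ) (hd : 0 < d) (hreg : G.IsRegularOfDegree d)
    (m : ℕ) (v : V → EuclideanSpace ℝ (Fin m))
    (hfeas : (∑ x, ∑ y, ‖v x - v y‖ ^ 2) / ((Fintype.card V : ℝ) ^ 2) = 1)
    (Opt : ℝ)
    (hobj : (∑ x, ∑ y, if G.Adj x y then ‖v x - v y‖ ^ 2 else 0) /
        ((d : ℝ) * (Fintype.card V : ℝ)) = Opt)
    (k : ℕ) (hk : 0 < k) :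
    (∀ w : (Fin k → V) → PiLp 2 (fun _ : Fin k => EuclideanSpace ℝ (Fin m)),
      (w = fun x => (Real.sqrt k)⁻¹ •
          (WithLp.equiv 2 (Fin k → EuclideanSpace ℝ (Fin m))).symm (fun j => v (x j))) →
      ((∑ x : Fin k → V, ∑ y : Fin k → V, ‖w x - w y‖ ^ 2) /
          (((Fintype.card V : ℝ) ^ k) ^ 2) = 1 ∧
        (∑ x : Fin k → V, ∑ p : Fin k × V,
            if G.Adj (x p.1) p.2 then ‖w x - w (Function.update x p.1 p.2)‖ ^ 2 else 0) /
          ((k : ℝ) * d * (Fintype.card V : ℝ) ^ k) = Opt / k)) ∧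
    sInf {r : ℝ | ∃ (m' : ℕ) (u : (Fin k → V) → EuclideanSpace ℝ (Fin m')),
        (∑ x : Fin k → V, ∑ y : Fin k → V, ‖u x - u y‖ ^ 2) /
          (((Fintype.card V : ℝ) ^ k) ^ 2) = 1 ∧
        r = (∑ x : Fin k → V, ∑ p : Fin k × V,
            if G.Adj (x p.1) p.2 then ‖u x - u (Function.update x p.1 p.2)‖ ^ 2 else 0) /
          ((k : ℝ) * d * (Fintype.card V : ℝ) ^ k)} ≤ Opt / k :=
  stmt_15_general G d m v hfeas Opt hobj k hk
end

section
/- Given Lasserre-level-t vectors {v_S}_{S⊆V(G), |S|≤t} satisfying ⟨v_{S₁}, v_{S₂}⟩ = ⟨v_{T₁}, v_{T₂}⟩ whenever S₁ Δ S₂ = T₁ Δ T₂, the vectors for T ⊆ V(G^{□k}) defined by v_T = ⊕_{j=1}^k v_{T_j}, where T_j = {y ∈ V(G) : #{x ∈ T : x_j = y} is odd}, satisfy the same consistency constraints: ⟨v_{T}, v_{T'}⟩ = ⟨v_{U}, v_{U'}⟩ whenever T Δ T' = U Δ U'. -/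
open Finset
open scoped RealInnerProductSpace

/-- For `T ⊆ V^k`, the set `T_j ⊆ V` of `j`-th coordinates appearing an odd number of
times in `T`. -/
def oddProj {V : Type*} [Fintype V] [DecidableEq V] {k : ℕ}
    (T : Finset (Fin k → V)) (j : Fin k) : Finset V :=
  Finset.univ.filter (fun y => Odd (T.filter (fun x => x j = y)).card)

/-! Parity of the number of points in a fibre is additive under symmetric difference, so
`(T Δ T')_j = T_j Δ T'_j`; moreover `|T_j| ≤ |T|`. Hence each coordinate summand of
`⟪W T, W T'⟫` is an instance of the consistency constraint for `v`. -/

namespace Finset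

variable {α : Type*} [DecidableEq α]

theorem card_symmDiff_add_two_mul_card_inter (s t : Finset α) :
    #(symmDiff s t) + 2 * #(s ∩ t) = #s + #t := by
  rw [two_mul, ← add_assoc, symmDiff_eq_sup_sdiff_inf, sup_eq_union, inf_eq_inter,
    card_sdiff_add_card_eq_card inter_subset_union, card_union_add_card_inter]

theorem odd_card_symmDiff_iff (s t : Finset α) :
    Odd #(symmDiff s t) ↔ (Odd #s ↔ Even #t) := by
  rw [← Nat.odd_add, ← card_symmDiff_add_two_mul_card_inter, Nat.odd_add, ← Nat.not_odd_iff_even,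
    Nat.odd_mul]
  simp

theorem filter_symmDiff (p : α → Prop) [DecidablePred p] (s t : Finset α) :
    filter p (symmDiff s t) = symmDiff (filter p s) (filter p t) := by
  ext x
  simp only [mem_filter, mem_symmDiff]
  tauto

end Finset

section OddProj

variable {V : Type*} [Fintype V] [DecidableEq V] {k : ℕ}

theorem oddProj_subset_image (T : Finset (Fin k → V)) (j : Fin k) :
    oddProj T j ⊆ T.image (fun x => x j) := by
  intro y hy
  obtain ⟨x, hx⟩ := card_pos.mp (mem_filter.mp hy).2.pos
  exact mem_image.mpr ⟨x, (mem_filter.mp hx).1, (mem_filter.mp hx).2⟩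

theorem card_oddProj_le (T : Finset (Fin k → V)) (j : Fin k) : #(oddProj T j) ≤ #T :=
  (card_le_card (oddProj_subset_image T j)).trans card_image_le

theorem oddProj_symmDiff (T T' : Finset (Fin k → V)) (j : Fin k) :
    oddProj (symmDiff T T') j = symmDiff (oddProj T j) (oddProj T' j) := by
  ext y
  simp only [oddProj, mem_filter, mem_univ, true_and, mem_symmDiff, filter_symmDiff,
    odd_card_symmDiff_iff, ← Nat.not_odd_iff_even]
  tauto

end OddProj

theorem inner_comp_eq_of_map_symmDiff {α V H : Type*} [DecidableEq α] [DecidableEq V]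
    [NormedAddCommGroup H] [InnerProductSpace ℝ H] {t : ℕ} {v : Finset V → H}
    (hcons : ∀ S₁ S₂ T₁ T₂ : Finset V,
      #S₁ ≤ t → #S₂ ≤ t → #T₁ ≤ t → #T₂ ≤ t →
      symmDiff S₁ S₂ = symmDiff T₁ T₂ → ⟪v S₁, v S₂⟫ = ⟪v T₁, v T₂⟫)
    {f : Finset α → Finset V} (hf_card : ∀ T, #(f T) ≤ #T)
    (hf_symmDiff : ∀ T T', f (symmDiff T T') = symmDiff (f T) (f T'))
    {T T' U U' : Finset α} (hT : #T ≤ t) (hT' : #T' ≤ t) (hU : #U ≤ t) (hU' : #U' ≤ t)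
    (h : symmDiff T T' = symmDiff U U') :
    ⟪v (f T), v (f T')⟫ = ⟪v (f U), v (f U')⟫ :=
  hcons _ _ _ _ ((hf_card T).trans hT) ((hf_card T').trans hT') ((hf_card U).trans hU)
    ((hf_card U').trans hU') (by rw [← hf_symmDiff, ← hf_symmDiff, h])

/-- Given Lasserre level-`t` vectors `{v_S}` with
`⟨v_{S₁}, v_{S₂}⟩ = ⟨v_{T₁}, v_{T₂}⟩` whenever `S₁ Δ S₂ = T₁ Δ T₂`, the direct-sum
vectors `W_T = ⊕_j v_{T_j}` (with `T_j` the odd-multiplicity projection) satisfy the same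
consistency constraints on `V(G^{□k}) = V^k`. -/
theorem stmt_17 {V : Type*} [Fintype V] [DecidableEq V]
    {H : Type*} [NormedAddCommGroup H] [InnerProductSpace ℝ H]
    (t : ℕ) (v : Finset V → H)
    (hcons : ∀ S₁ S₂ T₁ T₂ : Finset V,
      S₁.card ≤ t → S₂.card ≤ t → T₁.card ≤ t → T₂.card ≤ t →
      symmDiff S₁ S₂ = symmDiff T₁ T₂ → ⟪v S₁, v S₂⟫ = ⟪v T₁, v T₂⟫)
    (k : ℕ)
    (W : Finset (Fin k → V) → PiLp 2 (fun _ : Fin k => H))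
    (hW : W = fun T => (WithLp.equiv 2 (Fin k → H)).symm (fun j => v (oddProj T j))) :
    ∀ T T' U U' : Finset (Fin k → V),
      T.card ≤ t → T'.card ≤ t → U.card ≤ t → U'.card ≤ t →
      symmDiff T T' = symmDiff U U' → ⟪W T, W T'⟫ = ⟪W U, W U'⟫ := by
  intro T T' U U' hT hT' hU hU' h
  subst hW
  simp only [PiLp.inner_apply, WithLp.equiv_symm_apply]
  exact sum_congr rfl fun j _ =>
    inner_comp_eq_of_map_symmDiff hcons (card_oddProj_le · j) (oddProj_symmDiff · · j)
      hT hT' hU hU' h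
end
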